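/- arXiv:2203.05005 — 2 statements merged into one kernel-verified Lean document; each statement's English description precedes it below -/
import Mathlib

section
/- Let p ∈ [1, ∞), μ, μ̃ ∈ P_p(X), ν, ν̃ ∈ P_p(Y), and let γ = μ ⊗ K^μ ∈ Π(μ, μ̃) and γ' = ν ⊗ K^ν ∈ Π(ν, ν̃). For π, κ ∈ Π(μ, ν), let π̃ and κ̃ be the (K^μ, K^ν)-shadows of π and κ respectively. Then D_KL(π̃, κ̃) ≤ D_KL(π, κ). In particular, since μ̃ ⊗ ν̃ is the (K^μ, K^ν)-shadow of μ ⊗ ν, it holds that D_KL(π̃, μ̃ ⊗ ν̃) ≤ D_KL(π, μ ⊗ ν). -/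
open MeasureTheory ProbabilityTheory Filter Set
open scoped ENNReal NNReal Topology ProbabilityTheory

noncomputable section

namespace AOT

variable {N : ℕ}

/-- The σ-algebra on a path space generated by the `t`-th coordinate. -/
def coordσ (X : Fin N → Type*) [∀ t, MeasurableSpace (X t)] (t : Fin N) :
    MeasurableSpace (∀ s, X s) :=
  MeasurableSpace.comap (fun x => x t) inferInstance

/-- The σ-algebra generated by the coordinates (strictly) before time `t`, from a family
of coordinate σ-algebras. -/
def pastσOf {A : Type*} (m : Fin N → MeasurableSpace A) (t : ℕ) : MeasurableSpace A :=
  ⨆ s : Fin N, ⨆ _ : (s : ℕ) < t, m s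

/-- The σ-algebra on a path space generated by the coordinates before time `t`. -/
def pastσ (X : Fin N → Type*) [∀ t, MeasurableSpace (X t)] (t : ℕ) :
    MeasurableSpace (∀ s, X s) :=
  pastσOf (coordσ X) t

/-- Conditional independence of the sub-σ-algebras `m₁` and `m₂` given `m₃`, under the
measure `π`: for all sets `A ∈ m₁`, `B ∈ m₂`, the conditional expectation (given `m₃`)
of the indicator of `A ∩ B` is a.s. the product of those of `A` and of `B`. -/
def CondIndepσ {Ω : Type*} {mΩ : MeasurableSpace Ω} (m₁ m₂ m₃ : MeasurableSpace Ω)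
    (π : @Measure Ω mΩ) : Prop :=
  ∀ A B : Set Ω, MeasurableSet[m₁] A → MeasurableSet[m₂] B →
    (π[(A ∩ B).indicator (fun _ => (1 : ℝ)) | m₃]) =ᵐ[π]
      (π[A.indicator (fun _ => (1 : ℝ)) | m₃]) * (π[B.indicator (fun _ => (1 : ℝ)) | m₃])

/-- Causality of a measure on `A × B` relative to families of coordinate σ-algebras
`mA` on `A` and `mB` on `B`: for every time `t`, the `t`-th coordinate of the first
component is conditionally independent of the (strict) past of the second component,
given the (strict) past of the first component. -/
def IsCausalFor {A B : Type*} [MeasurableSpace A] [MeasurableSpace B]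
    (mA : Fin N → MeasurableSpace A) (mB : Fin N → MeasurableSpace B)
    (π : Measure (A × B)) : Prop :=
  ∀ t : Fin N,
    CondIndepσ ((mA t).comap Prod.fst)
      ((pastσOf mB (t : ℕ)).comap Prod.snd)
      ((pastσOf mA (t : ℕ)).comap Prod.fst) π

/-- Anticausality: causality with the roles of the two components exchanged. -/
def IsAnticausalFor {A B : Type*} [MeasurableSpace A] [MeasurableSpace B]
    (mA : Fin N → MeasurableSpace A) (mB : Fin N → MeasurableSpace B)
    (π : Measure (A × B)) : Prop :=
  IsCausalFor mB mA (π.map Prod.swap)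

/-- A coupling of a measure on `X₁ × ⋯ × X_N` and a measure on `Y₁ × ⋯ × Y_N` is causal if
under it, for every `t`, `Y_{1:t}` is conditionally independent of `X_{t+1}` given `X_{1:t}`. -/
def IsCausal {X Y : Fin N → Type*} [∀ t, MeasurableSpace (X t)] [∀ t, MeasurableSpace (Y t)]
    (π : Measure ((∀ t, X t) × (∀ t, Y t))) : Prop :=
  IsCausalFor (coordσ X) (coordσ Y) π

def IsAnticausal {X Y : Fin N → Type*} [∀ t, MeasurableSpace (X t)] [∀ t, MeasurableSpace (Y t)]
    (π : Measure ((∀ t, X t) × (∀ t, Y t))) : Prop :=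
  IsAnticausalFor (coordσ X) (coordσ Y) π

def IsBicausal {X Y : Fin N → Type*} [∀ t, MeasurableSpace (X t)] [∀ t, MeasurableSpace (Y t)]
    (π : Measure ((∀ t, X t) × (∀ t, Y t))) : Prop :=
  IsCausal π ∧ IsAnticausal π

/-- `π` is a coupling of `μ` and `ν`. -/
def IsCoupling {A B : Type*} [MeasurableSpace A] [MeasurableSpace B]
    (μ : Measure A) (ν : Measure B) (π : Measure (A × B)) : Prop :=
  π.map Prod.fst = μ ∧ π.map Prod.snd = ν

/-- The four flavors of (adapted) optimal transport: plain, causal, anticausal, bicausal. -/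
inductive Flavor | plain | causal | anticausal | bicausal

/-- The adaptedness constraint corresponding to a flavor. -/
def IsAdapted {X Y : Fin N → Type*} [∀ t, MeasurableSpace (X t)] [∀ t, MeasurableSpace (Y t)] :
    Flavor → Measure ((∀ t, X t) × (∀ t, Y t)) → Prop
  | .plain => fun _ => True
  | .causal => fun π => IsCausal π
  | .anticausal => fun π => IsAnticausal π
  | .bicausal => fun π => IsBicausal π

/-- The set `Π_•(μ, ν)` of couplings of `μ` and `ν` with the adaptedness constraint
given by the flavor `b`. -/
def aCouplings {X Y : Fin N → Type*} [∀ t, MeasurableSpace (X t)] [∀ t, MeasurableSpace (Y t)]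
    (b : Flavor) (μ : Measure (∀ t, X t)) (ν : Measure (∀ t, Y t)) :
    Set (Measure ((∀ t, X t) × (∀ t, Y t))) :=
  {π | IsCoupling μ ν π ∧ IsAdapted b π}

/-- `p`-th power transport cost of a coupling. -/
def lcost (p : ℝ) {A : Type*} [MeasurableSpace A] [PseudoEMetricSpace A]
    (π : Measure (A × A)) : ℝ≥0∞ :=
  ∫⁻ z, edist z.1 z.2 ^ p ∂π

/-- The (adapted) Wasserstein distance `W_{p,•}` between two measures on a path space. -/
def W {X : Fin N → Type*} [∀ t, MeasurableSpace (X t)] [∀ t, PseudoEMetricSpace (X t)]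
    (p : ℝ) (b : Flavor) (μ ν : Measure (∀ t, X t)) : ℝ≥0∞ :=
  (⨅ π : aCouplings b μ ν, lcost p π.1) ^ (1 / p)

/-- Coordinate σ-algebras on `X × Y` viewed as a single path space with
coordinates `X_t × Y_t`. -/
def coordσ2 (X Y : Fin N → Type*) [∀ t, MeasurableSpace (X t)] [∀ t, MeasurableSpace (Y t)]
    (t : Fin N) : MeasurableSpace ((∀ s, X s) × (∀ s, Y s)) :=
  ((coordσ X t).comap Prod.fst) ⊔ ((coordσ Y t).comap Prod.snd)

/-- Adaptedness for measures on `(X × Y) × (X × Y)`, where `X × Y` is regarded as a single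
path space with `N` time steps, the `t`-th coordinate being `X_t × Y_t`. -/
def IsAdapted2 {X Y : Fin N → Type*} [∀ t, MeasurableSpace (X t)] [∀ t, MeasurableSpace (Y t)] :
    Flavor → Measure (((∀ t, X t) × (∀ t, Y t)) × ((∀ t, X t) × (∀ t, Y t))) → Prop
  | .plain => fun _ => True
  | .causal => fun θ => IsCausalFor (coordσ2 X Y) (coordσ2 X Y) θ
  | .anticausal => fun θ => IsAnticausalFor (coordσ2 X Y) (coordσ2 X Y) θ
  | .bicausal => fun θ => IsCausalFor (coordσ2 X Y) (coordσ2 X Y) θ ∧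
      IsAnticausalFor (coordσ2 X Y) (coordσ2 X Y) θ

/-- The set `Π_•(π, π̃)` of couplings of two measures on `X × Y`, with adaptedness understood
for `X × Y` as one path space. -/
def aCouplings2 {X Y : Fin N → Type*} [∀ t, MeasurableSpace (X t)] [∀ t, MeasurableSpace (Y t)]
    (b : Flavor) (π ρ : Measure ((∀ t, X t) × (∀ t, Y t))) :
    Set (Measure (((∀ t, X t) × (∀ t, Y t)) × ((∀ t, X t) × (∀ t, Y t)))) :=
  {θ | IsCoupling π ρ θ ∧ IsAdapted2 b θ}

/-- `p`-th power transport cost `∫ d_X(x,x̃)^p + d_Y(y,ỹ)^p dθ` for couplings of couplings. -/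
def lcost2 (p : ℝ) {A B : Type*} [MeasurableSpace A] [MeasurableSpace B]
    [PseudoEMetricSpace A] [PseudoEMetricSpace B]
    (θ : Measure ((A × B) × (A × B))) : ℝ≥0∞ :=
  ∫⁻ z, (edist z.1.1 z.2.1 ^ p + edist z.1.2 z.2.2 ^ p) ∂θ

/-- The (adapted) Wasserstein distance `W_{p,•}(π, π̃)` between couplings, with cost
`d_X^p + d_Y^p` and `X × Y` regarded as one path space. -/
def W2 {X Y : Fin N → Type*} [∀ t, MeasurableSpace (X t)] [∀ t, MeasurableSpace (Y t)]
    [∀ t, PseudoEMetricSpace (X t)] [∀ t, PseudoEMetricSpace (Y t)]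
    (p : ℝ) (b : Flavor) (π ρ : Measure ((∀ t, X t) × (∀ t, Y t))) : ℝ≥0∞ :=
  (⨅ θ : aCouplings2 b π ρ, lcost2 p θ.1) ^ (1 / p)

/- Relative entropy (Kullback-Leibler divergence): `D_KL(π, ρ) = ∫ log (dπ/dρ) dπ` if
`π ≪ ρ` and the integral is defined, and `∞` otherwise. -/
open Classical in
def KL {Ω : Type*} [MeasurableSpace Ω] (π ρ : Measure Ω) : ℝ≥0∞ :=
  if π ≪ ρ ∧ Integrable (llr π ρ) π then ENNReal.ofReal (∫ ω, llr π ρ ω ∂π) else ⊤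

/-- The transport value `V_•(μ, ν, c)`. -/
def V {X Y : Fin N → Type*} [∀ t, MeasurableSpace (X t)] [∀ t, MeasurableSpace (Y t)]
    (b : Flavor) (μ : Measure (∀ t, X t)) (ν : Measure (∀ t, Y t))
    (c : (∀ t, X t) × (∀ t, Y t) → ℝ) : ℝ :=
  ⨅ π : aCouplings b μ ν, ∫ z, c z ∂π.1

/-- The entropic objective `∫ c dπ + ε D_KL(π, P)`, valued in `EReal`. -/
def entObj {Ω : Type*} [MeasurableSpace Ω] (c : Ω → ℝ) (ε : ℝ) (P : Measure Ω)
    (π : Measure Ω) : EReal :=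
  ((∫ z, c z ∂π : ℝ) : EReal) + (ε : EReal) * ((KL π P : ℝ≥0∞) : EReal)

/-- The entropic transport value `E_•^ε(μ, ν, c)`, valued in `EReal`. -/
def EE {X Y : Fin N → Type*} [∀ t, MeasurableSpace (X t)] [∀ t, MeasurableSpace (Y t)]
    (b : Flavor) (μ : Measure (∀ t, X t)) (ν : Measure (∀ t, Y t))
    (c : (∀ t, X t) × (∀ t, Y t) → ℝ) (ε : ℝ) : EReal :=
  ⨅ π : aCouplings b μ ν, entObj c ε (μ.prod ν) π.1

/-- The kernel `K(x, y) := K^μ(x) ⊗ K^ν(y)` used to build the shadow. -/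
def shadowKernel {A A' B B' : Type*} [MeasurableSpace A] [MeasurableSpace A']
    [MeasurableSpace B] [MeasurableSpace B']
    (Kμ : Kernel A A') (Kν : Kernel B B') : Kernel (A × B) (A' × B') :=
  (Kμ.comap Prod.fst measurable_fst) ×ₖ (Kν.comap Prod.snd measurable_snd)

/-- The `(K^μ, K^ν)`-shadow of `π`: the second marginal of `π ⊗ (K^μ ⊗ K^ν)`. -/
def shadow {A A' B B' : Type*} [MeasurableSpace A] [MeasurableSpace A']
    [MeasurableSpace B] [MeasurableSpace B']
    (π : Measure (A × B)) (Kμ : Kernel A A') (Kν : Kernel B B') : Measure (A' × B') :=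
  (π ⊗ₘ (shadowKernel Kμ Kν)).map Prod.snd

/-- `μ` has a finite `p`-th moment. -/
def MemPp {A : Type*} [MeasurableSpace A] [PseudoEMetricSpace A] (p : ℝ) (μ : Measure A) :
    Prop :=
  ∀ x₀ : A, ∫⁻ x, edist x₀ x ^ p ∂μ ≠ ⊤

/-- `c` has growth of order at most `p`. -/
def GrowthLE {A B : Type*} [PseudoEMetricSpace A] [PseudoEMetricSpace B]
    (p : ℝ) (c : A × B → ℝ) : Prop :=
  ∃ (x₀ : A) (y₀ : B) (M : ℝ), ∀ z : A × B,
    |c z| ≤ M * (1 + (edist x₀ z.1).toReal ^ p + (edist y₀ z.2).toReal ^ p)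

/-- Weak convergence of a sequence of measures (testing against bounded continuous
functions). -/
def WeakTendsto {A : Type*} [MeasurableSpace A] [TopologicalSpace A]
    (πs : ℕ → Measure A) (π : Measure A) : Prop :=
  ∀ f : BoundedContinuousFunction A ℝ,
    Tendsto (fun n => ∫ x, f x ∂(πs n)) atTop (𝓝 (∫ x, f x ∂π))

/-- A finitely supported (discrete) measure. -/
def FinitelySupported {A : Type*} [MeasurableSpace A] (μ : Measure A) : Prop :=
  ∃ s : Finset A, μ (↑s)ᶜ = 0


/-- `K` is a version of the conditional distribution of the random element `V` given the
sub-σ-algebra `m`, under the measure `ρ`. -/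
def IsCondDistrib' {Ω E : Type*} {mΩ : MeasurableSpace Ω} [MeasurableSpace E]
    (ρ : @Measure Ω mΩ) (V : Ω → E) (m : MeasurableSpace Ω) (K : Ω → Measure E) : Prop :=
  (∀ ω, IsProbabilityMeasure (K ω)) ∧
  (∀ A : Set E, MeasurableSet A → Measurable[m] (fun ω => (K ω A).toReal)) ∧
  (∀ A : Set E, MeasurableSet A →
    (ρ[(V ⁻¹' A).indicator (fun _ => (1 : ℝ)) | m]) =ᵐ[ρ] fun ω => (K ω A).toReal)

/-- `Kμ` is a family of disintegration kernels of `μ` on a path space: `Kμ t` is a version of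
the conditional distribution of the `t`-th coordinate given the past before `t`. -/
def IsDisintegration {X : Fin N → Type*} [∀ t, MeasurableSpace (X t)]
    (μ : Measure (∀ t, X t)) (Kμ : ∀ t : Fin N, (∀ s, X s) → Measure (X t)) : Prop :=
  ∀ t : Fin N, IsCondDistrib' μ (fun x => x t) (pastσ X (t : ℕ)) (Kμ t)

variable {X Y : Fin N → Type*} [∀ t, MeasurableSpace (X t)] [∀ t, MeasurableSpace (Y t)]

open Classical in
/-- Membership in the dual building block `A_{X,μ,t}` (relative to a fixed family `Kμ` of
disintegration kernels of `μ`): for `t = 1` the bounded measurable functions of `x₁`; for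
`t ≥ 2` functions `a_t(x_{1:t}, y_{1:t-1}) - ∫ a_t(x_{1:t-1}, x̃_t, y_{1:t-1}) μ_t^{x_{1:t-1}}(dx̃_t)`
with `a_t` bounded measurable. (Here `τ` is the 0-based coordinate index, `τ = t - 1`.) -/
def MemAX (Kμ : ∀ t : Fin N, (∀ s, X s) → Measure (X t)) (τ : Fin N)
    (f : (∀ t, X t) × (∀ t, Y t) → ℝ) : Prop :=
  if (τ : ℕ) = 0 then
    ∃ a : (∀ t, X t) × (∀ t, Y t) → ℝ,
      Measurable[(coordσ X τ).comap Prod.fst] a ∧ (∃ M, ∀ ω, |a ω| ≤ M) ∧ f = a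
  else
    ∃ a : (∀ t, X t) × (∀ t, Y t) → ℝ,
      Measurable[((pastσ X (τ : ℕ) ⊔ coordσ X τ).comap Prod.fst) ⊔
        ((pastσ Y (τ : ℕ)).comap Prod.snd)] a ∧ (∃ M, ∀ ω, |a ω| ≤ M) ∧
      f = fun ω => a ω - ∫ x', a (Function.update ω.1 τ x', ω.2) ∂(Kμ τ ω.1)

open Classical in
/-- Membership in the dual building block `A_{Y,ν,t}` (symmetric to `MemAX`). -/
def MemAY (Kν : ∀ t : Fin N, (∀ s, Y s) → Measure (Y t)) (τ : Fin N)
    (f : (∀ t, X t) × (∀ t, Y t) → ℝ) : Prop :=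
  if (τ : ℕ) = 0 then
    ∃ a : (∀ t, X t) × (∀ t, Y t) → ℝ,
      Measurable[(coordσ Y τ).comap Prod.snd] a ∧ (∃ M, ∀ ω, |a ω| ≤ M) ∧ f = a
  else
    ∃ a : (∀ t, X t) × (∀ t, Y t) → ℝ,
      Measurable[((pastσ X (τ : ℕ)).comap Prod.fst) ⊔
        ((pastσ Y (τ : ℕ) ⊔ coordσ Y τ).comap Prod.snd)] a ∧ (∃ M, ∀ ω, |a ω| ≤ M) ∧
      f = fun ω => a ω - ∫ y', a (ω.1, Function.update ω.2 τ y') ∂(Kν τ ω.2)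

/-- The dual space `S_{X,μ}`: sums `∑_{t=1}^N f_t` with `f_t ∈ A_{X,μ,t}`. -/
def MemSXμ (Kμ : ∀ t : Fin N, (∀ s, X s) → Measure (X t))
    (s : (∀ t, X t) × (∀ t, Y t) → ℝ) : Prop :=
  ∃ f : Fin N → ((∀ t, X t) × (∀ t, Y t) → ℝ),
    (∀ τ, MemAX Kμ τ (f τ)) ∧ s = fun ω => ∑ τ, f τ ω

/-- The dual space `S_{Y,ν}`: sums `∑_{t=1}^N g_t` with `g_t ∈ A_{Y,ν,t}`. -/
def MemSYν (Kν : ∀ t : Fin N, (∀ s, Y s) → Measure (Y t))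
    (s : (∀ t, X t) × (∀ t, Y t) → ℝ) : Prop :=
  ∃ g : Fin N → ((∀ t, X t) × (∀ t, Y t) → ℝ),
    (∀ τ, MemAY Kν τ (g τ)) ∧ s = fun ω => ∑ τ, g τ ω

/-- The space `S_X` of bounded measurable functions depending only on `x`. -/
def MemSX (s : (∀ t, X t) × (∀ t, Y t) → ℝ) : Prop :=
  ∃ g : (∀ t, X t) → ℝ, Measurable g ∧ (∃ M, ∀ x, |g x| ≤ M) ∧ s = fun ω => g ω.1

/-- The space `S_Y` of bounded measurable functions depending only on `y`. -/
def MemSY (s : (∀ t, X t) × (∀ t, Y t) → ℝ) : Prop :=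
  ∃ g : (∀ t, Y t) → ℝ, Measurable g ∧ (∃ M, ∀ y, |g y| ≤ M) ∧ s = fun ω => g ω.2

/-- The dual space `H_•`: `H = S_X ⊕ S_Y`, `H_c = S_{X,μ} ⊕ S_Y`, `H_{ac} = S_X ⊕ S_{Y,ν}`,
`H_{bc} = S_{X,μ} ⊕ S_{Y,ν}`. -/
def MemH (Kμ : ∀ t : Fin N, (∀ s, X s) → Measure (X t))
    (Kν : ∀ t : Fin N, (∀ s, Y s) → Measure (Y t)) :
    Flavor → ((∀ t, X t) × (∀ t, Y t) → ℝ) → Prop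
  | .plain => fun h => ∃ sX sY, MemSX (X := X) (Y := Y) sX ∧ MemSY sY ∧
      h = fun ω => sX ω + sY ω
  | .causal => fun h => ∃ sX sY, MemSXμ Kμ sX ∧ MemSY sY ∧ h = fun ω => sX ω + sY ω
  | .anticausal => fun h => ∃ sX sY, MemSX (X := X) (Y := Y) sX ∧ MemSYν Kν sY ∧
      h = fun ω => sX ω + sY ω
  | .bicausal => fun h => ∃ sX sY, MemSXμ Kμ sX ∧ MemSYν Kν sY ∧ h = fun ω => sX ω + sY ω

/-- The set `Π_c(μ, ∗)` of causal measures with first marginal `μ` and arbitrary second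
marginal. -/
def causalFirst (μ : Measure (∀ t, X t)) : Set (Measure ((∀ t, X t) × (∀ t, Y t))) :=
  {π | π.map Prod.fst = μ ∧ IsCausal π}

/-- The set `Π(∗, ν)` of couplings with arbitrary first marginal and second marginal `ν`. -/
def secondMarg (ν : Measure (∀ t, Y t)) : Set (Measure ((∀ t, X t) × (∀ t, Y t))) :=
  {π | π.map Prod.snd = ν}

/-- The set `Π_{ac}(∗, ν)` of anticausal measures with second marginal `ν`. -/
def anticausalSecond (ν : Measure (∀ t, Y t)) : Set (Measure ((∀ t, X t) × (∀ t, Y t))) :=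
  {π | π.map Prod.snd = ν ∧ IsAnticausal π}

/-- The reference measure `P_c` with `dP_c/dP = exp(-c)/∫ exp(-c) dP`. -/
def Pc {Ω : Type*} [MeasurableSpace Ω] (P : Measure Ω) (c : Ω → ℝ) : Measure Ω :=
  P.withDensity
    (fun ω => ENNReal.ofReal (Real.exp (-c ω)) / ∫⁻ ω', ENNReal.ofReal (Real.exp (-c ω')) ∂P)

/-- Sinkhorn's algorithm: `full 0 = π0`; `half k` is the `D_KL`-projection of `full k`
onto `Q1`, and `full (k+1)` is the `D_KL`-projection of `half k` onto `Q2`. -/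
structure IsSinkhorn {Ω : Type*} [MeasurableSpace Ω] (Q1 Q2 : Set (Measure Ω))
    (π0 : Measure Ω) (full half : ℕ → Measure Ω) : Prop where
  init : full 0 = π0
  half_mem : ∀ k, half k ∈ Q1
  half_opt : ∀ k, ∀ ρ ∈ Q1, KL (half k) (full k) ≤ KL ρ (full k)
  full_mem : ∀ k, full (k + 1) ∈ Q2
  full_opt : ∀ k, ∀ ρ ∈ Q2, KL (full (k + 1)) (half k) ≤ KL ρ (half k)

/-- The second projection set of Sinkhorn's algorithm: `Π(∗, ν)` for the causal problem and
`Π_{ac}(∗, ν)` for the bicausal problem. -/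
def sinkQ2 (b : Flavor) (ν : Measure (∀ t, Y t)) : Set (Measure ((∀ t, X t) × (∀ t, Y t))) :=
  match b with
  | .bicausal => anticausalSecond ν
  | _ => secondMarg ν

/-- The dual class of the second Sinkhorn potential: `S_Y` for the causal problem,
`S_{Y,ν}` for the bicausal problem. -/
def MemG (Kν : ∀ t : Fin N, (∀ s, Y s) → Measure (Y t)) :
    Flavor → ((∀ t, X t) × (∀ t, Y t) → ℝ) → Prop
  | .bicausal => fun g => MemSYν Kν g
  | _ => fun g => MemSY g

/-- Real-valued entropic transport value (`ε = 1`), the infimum being taken over couplings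
with finite relative entropy. -/
def Efin (b : Flavor) (μ : Measure (∀ t, X t)) (ν : Measure (∀ t, Y t))
    (c : (∀ t, X t) × (∀ t, Y t) → ℝ) : ℝ :=
  ⨅ π : {π : Measure ((∀ t, X t) × (∀ t, Y t)) //
      π ∈ aCouplings b μ ν ∧ KL π (μ.prod ν) ≠ ⊤},
    (∫ z, c z ∂π.1 + (KL π.1 (μ.prod ν)).toReal)

/-! The shadow of `π` is the image `(K^μ ∥ K^ν) ∘ π` of `π` under a Markov kernel, so both
inequalities are instances of the data processing inequality for relative entropy; for the
second one, the shadow of `μ ⊗ ν` is `(K^μ ∘ μ) ⊗ (K^ν ∘ ν) = μ̃ ⊗ ν̃`. -/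

open InformationTheory

/-- Mathlib's `klDiv` adds the correction `ρ(univ) - π(univ)`, which vanishes here. -/
lemma KL_eq_klDiv_of_measure_univ_eq {Ω : Type*} [MeasurableSpace Ω] {π ρ : Measure Ω}
    (h : π univ = ρ univ) : KL π ρ = klDiv π ρ := by
  by_cases hfin : π ≪ ρ ∧ Integrable (llr π ρ) π
  · rw [KL, if_pos hfin, klDiv_of_ac_of_integrable hfin.1 hfin.2, measureReal_def,
      measureReal_def, h, add_sub_cancel_right]
  · rw [KL, if_neg hfin, eq_comm, klDiv_eq_top_iff]
    exact fun hac hint => hfin ⟨hac, hint⟩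

lemma IsCoupling.measure_univ_eq {A B : Type*} [MeasurableSpace A] [MeasurableSpace B]
    {μ : Measure A} {ν : Measure B} {π : Measure (A × B)} (h : IsCoupling μ ν π) :
    π univ = μ univ := by
  rw [← h.1, Measure.map_apply measurable_fst MeasurableSet.univ, preimage_univ]

section Shadow

variable {A A' B B' : Type*} [MeasurableSpace A] [MeasurableSpace A']
    [MeasurableSpace B] [MeasurableSpace B']

lemma shadowKernel_eq_parallelComp (Kμ : Kernel A A') [IsSFiniteKernel Kμ]
    (Kν : Kernel B B') [IsSFiniteKernel Kν] : shadowKernel Kμ Kν = Kμ ∥ₖ Kν := by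
  ext z : 1
  rw [shadowKernel, Kernel.prod_apply, Kernel.comap_apply, Kernel.comap_apply,
    Kernel.parallelComp_apply]

lemma shadow_eq_comp (π : Measure (A × B)) [SFinite π] (Kμ : Kernel A A') [IsSFiniteKernel Kμ]
    (Kν : Kernel B B') [IsSFiniteKernel Kν] : shadow π Kμ Kν = (Kμ ∥ₖ Kν) ∘ₘ π := by
  rw [shadow, shadowKernel_eq_parallelComp, ← Measure.snd_compProd]
  rfl

lemma shadow_prod (μ : Measure A) (ν : Measure B) [SFinite μ] [SFinite ν]
    (Kμ : Kernel A A') [IsSFiniteKernel Kμ] (Kν : Kernel B B') [IsSFiniteKernel Kν] :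
    shadow (μ.prod ν) Kμ Kν = (Kμ ∘ₘ μ).prod (Kν ∘ₘ ν) := by
  rw [shadow_eq_comp, Measure.prod_comp_right, Measure.prod_comp_left, Measure.comp_assoc,
    Kernel.parallelComp_id_left_comp_parallelComp, Kernel.comp_id]

lemma KL_shadow_le (π κ : Measure (A × B)) [IsFiniteMeasure π] [IsFiniteMeasure κ]
    (h : π univ = κ univ) (Kμ : Kernel A A') [IsMarkovKernel Kμ]
    (Kν : Kernel B B') [IsMarkovKernel Kν] :
    KL (shadow π Kμ Kν) (shadow κ Kμ Kν) ≤ KL π κ := by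
  rw [shadow_eq_comp, shadow_eq_comp, KL_eq_klDiv_of_measure_univ_eq h,
    KL_eq_klDiv_of_measure_univ_eq (by simp [h])]
  exact klDiv_comp_right_le π κ _

end Shadow

theorem stmt_2_general {N : ℕ} (X Y : Fin N → Type*)
    [∀ t, MeasurableSpace (X t)]
    [∀ t, MeasurableSpace (Y t)]
    (μ μ' : Measure (∀ t, X t)) (ν ν' : Measure (∀ t, Y t))
    [IsProbabilityMeasure μ]
    [IsProbabilityMeasure ν]
    (Kμ : Kernel (∀ t, X t) (∀ t, X t)) [IsMarkovKernel Kμ]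
    (Kν : Kernel (∀ t, Y t) (∀ t, Y t)) [IsMarkovKernel Kν]
    (hγ : IsCoupling μ μ' (μ ⊗ₘ Kμ)) (hγ' : IsCoupling ν ν' (ν ⊗ₘ Kν))
    (π κ : Measure ((∀ t, X t) × (∀ t, Y t)))
    (hπ : π ∈ aCouplings .plain μ ν) (hκ : κ ∈ aCouplings .plain μ ν) :
    KL (shadow π Kμ Kν) (shadow κ Kμ Kν) ≤ KL π κ ∧
      KL (shadow π Kμ Kν) (μ'.prod ν') ≤ KL π (μ.prod ν) := by
  have hπ_univ : π univ = 1 := by rw [hπ.1.measure_univ_eq, measure_univ]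
  have hκ_univ : κ univ = 1 := by rw [hκ.1.measure_univ_eq, measure_univ]
  have hπ_prob : IsProbabilityMeasure π := ⟨hπ_univ⟩
  have hκ_prob : IsProbabilityMeasure κ := ⟨hκ_univ⟩
  have hμ' : Kμ ∘ₘ μ = μ' := by rw [← Measure.snd_compProd]; exact hγ.2
  have hν' : Kν ∘ₘ ν = ν' := by rw [← Measure.snd_compProd]; exact hγ'.2
  refine ⟨KL_shadow_le π κ (hπ_univ.trans hκ_univ.symm) Kμ Kν, ?_⟩
  rw [← hμ', ← hν', ← shadow_prod]
  exact KL_shadow_le π (μ.prod ν) (by simp [hπ_univ]) Kμ Kν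

/-- The shadow contracts relative entropy: if `π̃`, `κ̃` are the
`(K^μ, K^ν)`-shadows of `π, κ ∈ Π(μ, ν)`, then `D_KL(π̃, κ̃) ≤ D_KL(π, κ)`; in particular,
since `μ̃ ⊗ ν̃` is the shadow of `μ ⊗ ν`, `D_KL(π̃, μ̃ ⊗ ν̃) ≤ D_KL(π, μ ⊗ ν)`. -/
theorem stmt_2 {N : ℕ} (X Y : Fin N → Type*)
    [∀ t, MeasurableSpace (X t)] [∀ t, MetricSpace (X t)]
    [∀ t, PolishSpace (X t)] [∀ t, BorelSpace (X t)]
    [∀ t, MeasurableSpace (Y t)] [∀ t, MetricSpace (Y t)]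
    [∀ t, PolishSpace (Y t)] [∀ t, BorelSpace (Y t)]
    (p : ℝ) (hp : 1 ≤ p)
    (μ μ' : Measure (∀ t, X t)) (ν ν' : Measure (∀ t, Y t))
    [IsProbabilityMeasure μ] [IsProbabilityMeasure μ']
    [IsProbabilityMeasure ν] [IsProbabilityMeasure ν']
    (hμp : MemPp p μ) (hμ'p : MemPp p μ') (hνp : MemPp p ν) (hν'p : MemPp p ν')
    (Kμ : Kernel (∀ t, X t) (∀ t, X t)) [IsMarkovKernel Kμ]
    (Kν : Kernel (∀ t, Y t) (∀ t, Y t)) [IsMarkovKernel Kν]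
    (hγ : IsCoupling μ μ' (μ ⊗ₘ Kμ)) (hγ' : IsCoupling ν ν' (ν ⊗ₘ Kν))
    (π κ : Measure ((∀ t, X t) × (∀ t, Y t)))
    (hπ : π ∈ aCouplings .plain μ ν) (hκ : κ ∈ aCouplings .plain μ ν) :
    KL (shadow π Kμ Kν) (shadow κ Kμ Kν) ≤ KL π κ ∧
      KL (shadow π Kμ Kν) (μ'.prod ν') ≤ KL π (μ.prod ν) :=
  stmt_2_general X Y μ μ' ν ν' Kμ Kν hγ hγ' π κ hπ hκ

end AOT
end
end

section
/- Let p ∈ [1, ∞), μ, μ̃ ∈ P_p(X), ν, ν̃ ∈ P_p(Y), π ∈ Π(μ, ν), γ = μ ⊗ K^μ ∈ Π(μ, μ̃), γ' = ν ⊗ K^ν ∈ Π(ν, ν̃), let π̃ be the (K^μ, K^ν)-shadow of π, K(x, y) := K^μ(x) ⊗ K^ν(y), and θ := π ⊗ K ∈ Π(π, π̃). If μ ⊗ K^μ and ν ⊗ K^ν are causal, then θ ∈ Π_c(π, π̃). If moreover μ ⊗ K^μ is W_{p,c}(μ, μ̃)-optimal and ν ⊗ K^ν is W_{p,c}(ν,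 ν̃)-optimal, then W_{p,c}(π, π̃)^p ≤ W_{p,c}(μ, μ̃)^p + W_{p,c}(ν, ν̃)^p. -/
open MeasureTheory ProbabilityTheory Filter Set
open scoped ENNReal NNReal Topology ProbabilityTheory

noncomputable section

namespace AOT

variable {N : ℕ}

variable {X Y : Fin N → Type*} [∀ t, MeasurableSpace (X t)] [∀ t, MeasurableSpace (Y t)]

/-!
Write `θ = π ⊗ K`. Conditional independence of `𝓐` and `𝓑` given `𝓒` amounts to
`E[1_B | 𝓐 ∨ 𝓒] = E[1_B | 𝓒]` for `B ∈ 𝓑`. Under the causal coupling `μ ⊗ K^μ` this lets one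
enlarge the conditioning past of `x` one coordinate at a time up to all of `x`; hence, for `B` in
the past of `x̃` before time `t`, `x ↦ K^μ(x, B)` is a.s. a function of the past of `x` before
`t`. The same then holds for `K((x, y), ·)`: on rectangles `B_x × B_y` it is
`K^μ(x, B_x) K^ν(y, B_y)`, and a Dynkin argument covers the whole joint past. Read backwards,
this is the causality of `θ`. Finally, the cost of `θ` is the sum of the costs of `μ ⊗ K^μ` and
`ν ⊗ K^ν`, and `θ` competes in the infimum defining `W_{p,c}(π, π̃)`.
-/

section PastSigmaAlgebras

variable {Ω : Type*} {m : Fin N → MeasurableSpace Ω}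

lemma pastσOf_mono {s t : ℕ} (h : s ≤ t) : pastσOf m s ≤ pastσOf m t :=
  iSup₂_le fun u hu => le_iSup₂_of_le (f := fun (u : Fin N) (_ : (u : ℕ) < t) => m u) u
    (hu.trans_le h) le_rfl

lemma le_pastσOf {u : Fin N} {t : ℕ} (h : (u : ℕ) < t) : m u ≤ pastσOf m t :=
  le_iSup₂_of_le (f := fun (u : Fin N) (_ : (u : ℕ) < t) => m u) u h le_rfl

lemma pastσOf_le {m₀ : MeasurableSpace Ω} (h : ∀ u, m u ≤ m₀) (t : ℕ) : pastσOf m t ≤ m₀ :=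
  iSup₂_le fun u _ => h u

lemma pastσOf_succ {s : ℕ} (hs : s < N) : pastσOf m (s + 1) = pastσOf m s ⊔ m ⟨s, hs⟩ := by
  refine le_antisymm (iSup₂_le fun u hu => ?_)
    (sup_le (pastσOf_mono s.le_succ) (le_pastσOf s.lt_succ_self))
  rcases Nat.lt_succ_iff_lt_or_eq.mp hu with h | h
  · exact le_sup_of_le_left (le_pastσOf h)
  · exact (Fin.ext h : u = ⟨s, hs⟩) ▸ le_sup_right

lemma pastσOf_succ_of_le {s : ℕ} (hs : N ≤ s) : pastσOf m (s + 1) = pastσOf m s :=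
  le_antisymm (pastσOf_le (fun u => le_pastσOf (u.isLt.trans_le hs)) _)
    (pastσOf_mono s.le_succ)

lemma coordσ_le (t : Fin N) : coordσ X t ≤ MeasurableSpace.pi :=
  (measurable_pi_apply t).comap_le

lemma pastσ_le (t : ℕ) : pastσ X t ≤ MeasurableSpace.pi :=
  pastσOf_le coordσ_le t

lemma pastσ_eq_pi : pastσ X N = MeasurableSpace.pi :=
  le_antisymm (pastσ_le N) (iSup_le fun u => le_pastσOf (m := coordσ X) u.isLt)

lemma coordσ2_le (t : Fin N) : coordσ2 X Y t ≤ Prod.instMeasurableSpace :=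
  sup_le ((MeasurableSpace.comap_mono (coordσ_le t)).trans measurable_fst.comap_le)
    ((MeasurableSpace.comap_mono (coordσ_le t)).trans measurable_snd.comap_le)

lemma pastσOf_coordσ2 (t : ℕ) :
    pastσOf (coordσ2 X Y) t = (pastσ X t).comap Prod.fst ⊔ (pastσ Y t).comap Prod.snd := by
  simp only [pastσ, pastσOf, coordσ2, MeasurableSpace.comap_iSup, iSup_sup_eq]

lemma pastσOf_coordσ2_le (t : ℕ) : pastσOf (coordσ2 X Y) t ≤ Prod.instMeasurableSpace :=
  pastσOf_le coordσ2_le t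

lemma pastσOf_coordσ2_eq_generateFrom (t : ℕ) :
    pastσOf (coordσ2 X Y) t = MeasurableSpace.generateFrom
      (Set.image2 (· ×ˢ ·) {Bx | MeasurableSet[pastσ X t] Bx} {By | MeasurableSet[pastσ Y t] By}) :=
  (pastσOf_coordσ2 t).trans (@generateFrom_prod _ _ (pastσ X t) (pastσ Y t)).symm

end PastSigmaAlgebras

section CondIndep

variable {Ω : Type*} {m₁ m₂ m₃ m₀ : MeasurableSpace Ω} {π : Measure Ω}

lemma isPiSystem_image2_inter (m₁ m₃ : MeasurableSpace Ω) :
    IsPiSystem (Set.image2 (· ∩ ·) {A | MeasurableSet[m₁] A} {C | MeasurableSet[m₃] C}) := by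
  rintro _ ⟨A, hA, C, hC, rfl⟩ _ ⟨A', hA', C', hC', rfl⟩ -
  exact ⟨A ∩ A', hA.inter hA', C ∩ C', hC.inter hC', Set.inter_inter_inter_comm A A' C C'⟩

lemma sup_eq_generateFrom_image2_inter (m₁ m₃ : MeasurableSpace Ω) :
    m₁ ⊔ m₃ = MeasurableSpace.generateFrom
      (Set.image2 (· ∩ ·) {A | MeasurableSet[m₁] A} {C | MeasurableSet[m₃] C}) := by
  refine le_antisymm (sup_le (fun A hA => ?_) (fun C hC => ?_))
    (MeasurableSpace.generateFrom_le ?_)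
  · exact MeasurableSpace.measurableSet_generateFrom ⟨A, hA, Set.univ, .univ, Set.inter_univ A⟩
  · exact MeasurableSpace.measurableSet_generateFrom ⟨Set.univ, .univ, C, hC, Set.univ_inter C⟩
  · rintro _ ⟨A, hA, C, hC, rfl⟩
    exact (le_sup_left (b := m₃) _ hA).inter (le_sup_right (a := m₁) _ hC)

lemma norm_condExp_indicator_one_le (m : MeasurableSpace Ω) (B : Set Ω) :
    ∀ᵐ x ∂π, ‖(π⟦B | m⟧) x‖ ≤ 1 := by
  simpa only [Real.norm_eq_abs] using ae_bdd_abs_condExp_of_ae_bdd_abs (m := m) (μ := π)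
    (R := (1 : ℝ)) (f := B.indicator fun _ => (1 : ℝ)) (ae_of_all _ fun x => by
      simpa using norm_indicator_le_norm_self (fun _ => (1 : ℝ)) x)

lemma condExp_mul_indicator_one [IsFiniteMeasure π] (h₃ : m₃ ≤ m₀) {F : Ω → ℝ}
    (hF : StronglyMeasurable[m₃] F) (hFb : ∀ᵐ x ∂π, ‖F x‖ ≤ 1) {A : Set Ω} (hA : MeasurableSet A) :
    π[F * A.indicator fun _ => (1 : ℝ) | m₃] =ᵐ[π] F * π⟦A | m₃⟧ :=
  condExp_stronglyMeasurable_mul_of_bound h₃ hF ((integrable_const 1).indicator hA) 1 hFb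

lemma CondIndepσ.setIntegral_inter_condExp_indicator [IsFiniteMeasure π]
    (hCI : CondIndepσ m₁ m₂ m₃ π) (h₁ : m₁ ≤ m₀) (h₂ : m₂ ≤ m₀) (h₃ : m₃ ≤ m₀) {A B C : Set Ω}
    (hA : MeasurableSet[m₁] A) (hB : MeasurableSet[m₂] B) (hC : MeasurableSet[m₃] C) :
    ∫ x in A ∩ C, (π⟦B | m₃⟧) x ∂π = ∫ x in A ∩ C, B.indicator (fun _ => (1 : ℝ)) x ∂π := by
  set F := π⟦B | m₃⟧
  have hAB : MeasurableSet (A ∩ B) := (h₁ _ hA).inter (h₂ _ hB)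
  have hFA : Integrable (F * A.indicator fun _ => (1 : ℝ)) π :=
    ((integrable_const 1).indicator (h₁ _ hA)).bdd_mul
      (stronglyMeasurable_condExp.mono h₃).aestronglyMeasurable
      (norm_condExp_indicator_one_le m₃ B)
  calc ∫ x in A ∩ C, F x ∂π
      = ∫ x in C, (F * A.indicator fun _ => (1 : ℝ)) x ∂π := by
        rw [Set.inter_comm, ← setIntegral_indicator (h₁ _ hA)]
        congr 1 with x
        by_cases hx : x ∈ A <;> simp [hx]
    _ = ∫ x in C, π[F * A.indicator fun _ => (1 : ℝ) | m₃] x ∂π :=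
        (setIntegral_condExp h₃ hFA hC).symm
    _ = ∫ x in C, (π⟦A ∩ B | m₃⟧) x ∂π := by
        refine setIntegral_congr_ae (h₃ _ hC) ?_
        filter_upwards [condExp_mul_indicator_one h₃ stronglyMeasurable_condExp
          (norm_condExp_indicator_one_le m₃ B) (h₁ _ hA), hCI A B hA hB] with x hx hAB _
        rw [hx, hAB, Pi.mul_apply, Pi.mul_apply, mul_comm]
    _ = ∫ x in C, (A ∩ B).indicator (fun _ => (1 : ℝ)) x ∂π :=
        setIntegral_condExp h₃ ((integrable_const 1).indicator hAB) hC
    _ = ∫ x in A ∩ C, B.indicator (fun _ => (1 : ℝ)) x ∂π := by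
        rw [setIntegral_indicator hAB, setIntegral_indicator (h₂ _ hB), Set.inter_comm A C,
          Set.inter_assoc]

lemma CondIndepσ.condExp_indicator_sup_eq [IsFiniteMeasure π] (hCI : CondIndepσ m₁ m₂ m₃ π)
    (h₁ : m₁ ≤ m₀) (h₂ : m₂ ≤ m₀) (h₃ : m₃ ≤ m₀) {B : Set Ω} (hB : MeasurableSet[m₂] B) :
    π⟦B | m₁ ⊔ m₃⟧ =ᵐ[π] π⟦B | m₃⟧ := by
  have h₁₃ : m₁ ⊔ m₃ ≤ m₀ := sup_le h₁ h₃
  have hf : Integrable (B.indicator fun _ => (1 : ℝ)) π := (integrable_const 1).indicator (h₂ _ hB)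
  have hg : StronglyMeasurable[m₁ ⊔ m₃] (π⟦B | m₃⟧) :=
    (stronglyMeasurable_condExp (m := m₃)).mono le_sup_right
  refine (ae_eq_condExp_of_forall_setIntegral_eq h₁₃ hf
    (fun _ _ _ => integrable_condExp.integrableOn) (fun S hS hS_fin => ?_)
    hg.aestronglyMeasurable).symm
  clear hS_fin
  induction S, hS using MeasurableSpace.induction_on_inter
    (sup_eq_generateFrom_image2_inter m₁ m₃) (isPiSystem_image2_inter m₁ m₃) with
  | empty => simp
  | basic _ hS =>
    obtain ⟨A, hA, C, hC, rfl⟩ := hS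
    exact hCI.setIntegral_inter_condExp_indicator h₁ h₂ h₃ hA hB hC
  | compl S hS ih =>
    have hsplit_g := integral_add_compl (h₁₃ _ hS) (integrable_condExp (m := m₃) (μ := π)
      (f := B.indicator fun _ => (1 : ℝ)))
    have hsplit_f := integral_add_compl (h₁₃ _ hS) hf
    have htotal := integral_condExp h₃ (μ := π) (f := B.indicator fun _ => (1 : ℝ))
    linarith
  | iUnion S hdisj hS ih =>
    rw [integral_iUnion (fun i => h₁₃ _ (hS i)) hdisj integrable_condExp.integrableOn,
      integral_iUnion (fun i => h₁₃ _ (hS i)) hdisj hf.integrableOn]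
    exact tsum_congr ih

lemma condIndepσ_of_condExp_indicator_sup_eq [IsFiniteMeasure π] (h₁ : m₁ ≤ m₀)
    (h₂ : m₂ ≤ m₀) (h₃ : m₃ ≤ m₀)
    (h : ∀ B, MeasurableSet[m₂] B → π⟦B | m₁ ⊔ m₃⟧ =ᵐ[π] π⟦B | m₃⟧) :
    CondIndepσ m₁ m₂ m₃ π := by
  intro A B hA hB
  have h₁₃ : m₁ ⊔ m₃ ≤ m₀ := sup_le h₁ h₃
  have hA_sup : StronglyMeasurable[m₁ ⊔ m₃] (A.indicator fun _ => (1 : ℝ)) :=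
    stronglyMeasurable_const.indicator (le_sup_left (b := m₃) _ hA)
  have hA_bdd : ∀ᵐ x ∂π, ‖A.indicator (fun _ => (1 : ℝ)) x‖ ≤ 1 :=
    ae_of_all _ fun x => by simpa using norm_indicator_le_norm_self (fun _ => (1 : ℝ)) x
  have hAB : π⟦A ∩ B | m₁ ⊔ m₃⟧ =ᵐ[π] (A.indicator fun _ => (1 : ℝ)) * π⟦B | m₃⟧ := by
    rw [← Pi.one_def, Set.inter_indicator_one]
    refine (condExp_stronglyMeasurable_mul_of_bound h₁₃ hA_sup
      ((integrable_const 1).indicator (h₂ _ hB)) 1 hA_bdd).trans ?_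
    filter_upwards [h B hB] with x hx
    simp only [Pi.mul_apply, Pi.one_def, hx]
  calc π⟦A ∩ B | m₃⟧
      =ᵐ[π] π[π⟦A ∩ B | m₁ ⊔ m₃⟧ | m₃] := (condExp_condExp_of_le le_sup_right h₁₃).symm
    _ =ᵐ[π] π[π⟦B | m₃⟧ * A.indicator fun _ => (1 : ℝ) | m₃] := by
        rw [mul_comm]; exact condExp_congr_ae hAB
    _ =ᵐ[π] π⟦B | m₃⟧ * π⟦A | m₃⟧ := condExp_mul_indicator_one h₃ stronglyMeasurable_condExp
        (norm_condExp_indicator_one_le m₃ B) (h₁ _ hA)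
    _ = π⟦A | m₃⟧ * π⟦B | m₃⟧ := mul_comm _ _

end CondIndep

section Kernels

variable {α β : Type*} {m mα : MeasurableSpace α} {mβ : MeasurableSpace β}

lemma ae_of_ae_compProd_fst {μ : Measure α} [SFinite μ] {κ : Kernel α β} [IsMarkovKernel κ]
    {p : α → Prop} (h : ∀ᵐ z ∂(μ ⊗ₘ κ), p z.1) : ∀ᵐ a ∂μ, p a :=
  (Measure.ae_ae_of_ae_compProd h).mono fun _ ha => ha.exists.elim fun _ => id

lemma condExp_indicator_snd_preimage_compProd (μ : Measure α) [IsFiniteMeasure μ]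
    (κ : Kernel α β) [IsMarkovKernel κ] (hm : m ≤ mα) {B : Set β}
    (hB : MeasurableSet B) {g : α → ℝ≥0∞} (hg : Measurable[m] g)
    (hκg : (fun a => κ a B) =ᵐ[μ] g) :
    (μ ⊗ₘ κ)⟦Prod.snd ⁻¹' B | m.comap Prod.fst⟧ =ᵐ[μ ⊗ₘ κ] fun z => (g z.1).toReal := by
  have hκ_int : Integrable (fun a => (κ a B).toReal) μ :=
    (integrable_const (1 : ℝ)).mono' (κ.measurable_coe hB).ennreal_toReal.aestronglyMeasurable
      (ae_of_all _ fun a => by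
        simpa using ENNReal.toReal_le_of_le_ofReal zero_le_one (by simpa using prob_le_one))
  have hg_int : Integrable (fun a => (g a).toReal) μ :=
    hκ_int.congr (hκg.mono fun a ha => by simp only [ha])
  rw [← Measure.fst_compProd μ κ] at hg_int
  have hg_fst : StronglyMeasurable[m.comap Prod.fst] fun z : α × β => (g z.1).toReal :=
    (hg.ennreal_toReal.comp (comap_measurable Prod.fst)).stronglyMeasurable
  refine (ae_eq_condExp_of_forall_setIntegral_eq ((measurable_fst.mono le_rfl hm).comap_le)
    ((integrable_const 1).indicator (measurable_snd hB))
    (fun _ _ _ => (hg_int.comp_measurable measurable_fst).integrableOn) ?_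
    hg_fst.aestronglyMeasurable).symm
  rintro _ ⟨S, hS, rfl⟩ -
  have hS' : MeasurableSet[mα] S := hm _ hS
  calc ∫ z in Prod.fst ⁻¹' S, (g z.1).toReal ∂(μ ⊗ₘ κ)
      = ∫ a in S, (g a).toReal ∂μ := by
        conv_rhs => rw [← Measure.fst_compProd μ κ]
        exact (setIntegral_map hS' (hg.mono hm le_rfl).ennreal_toReal.aestronglyMeasurable
          measurable_fst.aemeasurable).symm
    _ = ∫ a in S, (κ a B).toReal ∂μ :=
        setIntegral_congr_ae hS' (hκg.mono fun a ha _ => by simp only [ha])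
    _ = ∫ z in Prod.fst ⁻¹' S, (Prod.snd ⁻¹' B).indicator (fun _ => (1 : ℝ)) z ∂(μ ⊗ₘ κ) := by
        rw [setIntegral_indicator (measurable_snd hB), setIntegral_const, smul_eq_mul, mul_one,
          ← Set.prod_eq, measureReal_def, Measure.compProd_apply_prod hS' hB,
          integral_toReal (κ.measurable_coe hB).aemeasurable
            (ae_of_all _ fun a => measure_lt_top _ _)]

lemma aestronglyMeasurable_kernel_of_isPiSystem {μ : Measure α} {κ : Kernel α β}
    [IsMarkovKernel κ] {mB : MeasurableSpace β} (hmB : mB ≤ mβ) {C : Set (Set β)}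
    (hgen : mB = MeasurableSpace.generateFrom C) (hC : IsPiSystem C)
    (hbasic : ∀ s ∈ C, AEStronglyMeasurable[m] (fun a => κ a s) μ) {s : Set β}
    (hs : MeasurableSet[mB] s) : AEStronglyMeasurable[m] (fun a => κ a s) μ := by
  induction s, hs using MeasurableSpace.induction_on_inter hgen hC with
  | empty => exact ⟨0, stronglyMeasurable_const, ae_of_all _ fun a => by simp⟩
  | basic s hs => exact hbasic s hs
  | compl s hs ih =>
    obtain ⟨g, hg, hκg⟩ := ih
    refine ⟨fun a => 1 - g a, (measurable_const.sub hg.measurable).stronglyMeasurable, ?_⟩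
    filter_upwards [hκg] with a ha
    rw [prob_compl_eq_one_sub (hmB _ hs), ha]
  | iUnion s hdisj hs ih =>
    choose g hg hκg using ih
    have hsum : Measurable[m] fun a => ∑' i, g i a := by
      -- `Measurable.tsum` takes the σ-algebra on the domain as an instance argument.
      let _ : MeasurableSpace α := m
      exact Measurable.tsum fun i => (hg i).measurable
    refine ⟨fun a => ∑' i, g i a, hsum.stronglyMeasurable, ?_⟩
    filter_upwards [ae_all_iff.2 hκg] with a ha
    rw [measure_iUnion hdisj fun i => hmB _ (hs i)]
    exact tsum_congr ha

end Kernels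

section ShadowKernel

variable {A A' B B' : Type*} [MeasurableSpace A] [MeasurableSpace A'] [MeasurableSpace B]
  [MeasurableSpace B'] {Kμ : Kernel A A'} {Kν : Kernel B B'}

instance isMarkovKernel_shadowKernel [IsMarkovKernel Kμ] [IsMarkovKernel Kν] :
    IsMarkovKernel (shadowKernel Kμ Kν) := by
  unfold shadowKernel
  infer_instance

lemma shadowKernel_apply [IsSFiniteKernel Kμ] [IsSFiniteKernel Kν] (w : A × B) :
    shadowKernel Kμ Kν w = (Kμ w.1).prod (Kν w.2) := by
  rw [shadowKernel, Kernel.prod_apply, Kernel.comap_apply, Kernel.comap_apply]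

variable [IsMarkovKernel Kμ] [IsMarkovKernel Kν] {π : Measure (A × B)} [IsFiniteMeasure π]

lemma lintegral_compProd_shadowKernel_fst {f : A × A' → ℝ≥0∞} (hf : Measurable f) :
    ∫⁻ z, f (z.1.1, z.2.1) ∂(π ⊗ₘ shadowKernel Kμ Kν) = ∫⁻ z, f z ∂(π.map Prod.fst ⊗ₘ Kμ) := by
  have hf₁ : Measurable fun z : (A × B) × (A' × B') => f (z.1.1, z.2.1) := by fun_prop
  rw [Measure.lintegral_compProd hf₁, Measure.lintegral_compProd hf,
    lintegral_map hf.lintegral_kernel_prod_right' measurable_fst]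
  congr 1 with w
  rw [shadowKernel_apply, ← lintegral_map (f := fun x => f (w.1, x)) (by fun_prop) measurable_fst,
    Measure.map_fst_prod, measure_univ, one_smul]

lemma lintegral_compProd_shadowKernel_snd {f : B × B' → ℝ≥0∞} (hf : Measurable f) :
    ∫⁻ z, f (z.1.2, z.2.2) ∂(π ⊗ₘ shadowKernel Kμ Kν) = ∫⁻ z, f z ∂(π.map Prod.snd ⊗ₘ Kν) := by
  have hf₂ : Measurable fun z : (A × B) × (A' × B') => f (z.1.2, z.2.2) := by fun_prop
  rw [Measure.lintegral_compProd hf₂, Measure.lintegral_compProd hf,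
    lintegral_map hf.lintegral_kernel_prod_right' measurable_snd]
  congr 1 with w
  rw [shadowKernel_apply, ← lintegral_map (f := fun y => f (w.2, y)) (by fun_prop) measurable_snd,
    Measure.map_snd_prod, measure_univ, one_smul]

end ShadowKernel

section Causal

lemma IsCausal.condExp_indicator_pastσ_eq {ρ : Measure ((∀ t, X t) × (∀ t, Y t))}
    [IsFiniteMeasure ρ] (hρ : IsCausal ρ) {t s : ℕ} (hts : t ≤ s) {B : Set (∀ t, Y t)}
    (hB : MeasurableSet[pastσ Y t] B) :
    ρ⟦Prod.snd ⁻¹' B | (pastσ X s).comap Prod.fst⟧ =ᵐ[ρ]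
      ρ⟦Prod.snd ⁻¹' B | (pastσ X t).comap Prod.fst⟧ := by
  induction s, hts using Nat.le_induction with
  | base => rfl
  | succ s hts ih =>
    refine .trans ?_ ih
    rcases lt_or_ge s N with hsN | hsN
    · have h := (hρ ⟨s, hsN⟩).condExp_indicator_sup_eq
        ((measurable_fst.mono le_rfl (coordσ_le _)).comap_le)
        ((measurable_snd.mono le_rfl (pastσ_le _)).comap_le)
        ((measurable_fst.mono le_rfl (pastσ_le _)).comap_le) ⟨B, pastσOf_mono hts _ hB, rfl⟩
      rwa [← MeasurableSpace.comap_sup, sup_comm, ← pastσOf_succ hsN] at h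
    · rw [pastσ, pastσOf_succ_of_le hsN]
      rfl

lemma IsCausal.aestronglyMeasurable_kernel_pastσ {μ : Measure (∀ t, X t)} [IsFiniteMeasure μ]
    {κ : Kernel (∀ t, X t) (∀ t, Y t)} [IsMarkovKernel κ] (hc : IsCausal (μ ⊗ₘ κ)) {t : ℕ}
    (ht : t ≤ N) {B : Set (∀ t, Y t)} (hB : MeasurableSet[pastσ Y t] B) :
    AEStronglyMeasurable[pastσ X t] (fun x => κ x B) μ := by
  have hB' : MeasurableSet B := pastσ_le t _ hB
  have hfull := condExp_indicator_snd_preimage_compProd μ κ (pastσ_le N) hB'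
    ((κ.measurable_coe hB').mono pastσ_eq_pi.ge le_rfl) (ae_of_all _ fun _ => rfl)
  have hpast := (hc.condExp_indicator_pastσ_eq ht hB).symm.trans hfull
  obtain ⟨h, hh, hF⟩ := StronglyMeasurable.exists_eq_measurable_comp (mY := pastσ X t)
    (stronglyMeasurable_condExp (μ := μ ⊗ₘ κ) (f := (Prod.snd ⁻¹' B).indicator fun _ => (1 : ℝ)))
  refine ⟨fun x => ENNReal.ofReal (h x),
    (ENNReal.measurable_ofReal.comp hh.measurable).stronglyMeasurable,
    ae_of_ae_compProd_fst (κ := κ) ?_⟩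
  filter_upwards [hpast] with z hz
  rw [hF, Function.comp_apply] at hz
  simp [hz]

end Causal

section Shadow

variable {μ : Measure (∀ t, X t)} [IsFiniteMeasure μ] {ν : Measure (∀ t, Y t)} [IsFiniteMeasure ν]
  {Kμ : Kernel (∀ t, X t) (∀ t, X t)} [IsMarkovKernel Kμ]
  {Kν : Kernel (∀ t, Y t) (∀ t, Y t)} [IsMarkovKernel Kν]
  {π : Measure ((∀ t, X t) × (∀ t, Y t))}

lemma aestronglyMeasurable_shadowKernel_pastσ (hKμ : IsCausal (μ ⊗ₘ Kμ))
    (hKν : IsCausal (ν ⊗ₘ Kν)) (hπμ : π.map Prod.fst = μ) (hπν : π.map Prod.snd = ν) {t : ℕ}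
    (ht : t ≤ N) {B : Set ((∀ t, X t) × (∀ t, Y t))}
    (hB : MeasurableSet[pastσOf (coordσ2 X Y) t] B) :
    AEStronglyMeasurable[pastσOf (coordσ2 X Y) t] (fun w => shadowKernel Kμ Kν w B) π := by
  refine aestronglyMeasurable_kernel_of_isPiSystem (pastσOf_coordσ2_le t)
    (pastσOf_coordσ2_eq_generateFrom t) (@isPiSystem_prod _ _ (pastσ X t) (pastσ Y t)) ?_ hB
  rintro _ ⟨Bx, hBx, By, hBy, rfl⟩
  obtain ⟨g, hg, hKμg⟩ := hKμ.aestronglyMeasurable_kernel_pastσ ht hBx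
  obtain ⟨h, hh, hKνh⟩ := hKν.aestronglyMeasurable_kernel_pastσ ht hBy
  have hfst : Measurable[pastσOf (coordσ2 X Y) t, pastσ X t] Prod.fst :=
    measurable_iff_comap_le.2 ((pastσOf_coordσ2 t).ge.trans' le_sup_left)
  have hsnd : Measurable[pastσOf (coordσ2 X Y) t, pastσ Y t] Prod.snd :=
    measurable_iff_comap_le.2 ((pastσOf_coordσ2 t).ge.trans' le_sup_right)
  refine ⟨fun w => g w.1 * h w.2,
    ((hg.measurable.comp hfst).mul (hh.measurable.comp hsnd)).stronglyMeasurable, ?_⟩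
  filter_upwards [ae_of_ae_map measurable_fst.aemeasurable (hπμ ▸ hKμg),
    ae_of_ae_map measurable_snd.aemeasurable (hπν ▸ hKνh)] with w hw₁ hw₂
  rw [shadowKernel_apply, Measure.prod_prod, hw₁, hw₂]

lemma isCausalFor_compProd_shadowKernel [IsFiniteMeasure π] (hKμ : IsCausal (μ ⊗ₘ Kμ))
    (hKν : IsCausal (ν ⊗ₘ Kν)) (hπμ : π.map Prod.fst = μ) (hπν : π.map Prod.snd = ν) :
    IsCausalFor (coordσ2 X Y) (coordσ2 X Y) (π ⊗ₘ shadowKernel Kμ Kν) := by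
  intro t
  have hpast := pastσOf_coordσ2_le (X := X) (Y := Y) t
  have hnow := sup_le (coordσ2_le t) hpast
  refine condIndepσ_of_condExp_indicator_sup_eq
    ((measurable_fst.mono le_rfl (coordσ2_le t)).comap_le)
    ((measurable_snd.mono le_rfl hpast).comap_le) ((measurable_fst.mono le_rfl hpast).comap_le) ?_
  rintro _ ⟨B, hB, rfl⟩
  obtain ⟨g, hg, hKg⟩ :=
    aestronglyMeasurable_shadowKernel_pastσ hKμ hKν hπμ hπν t.isLt.le hB
  rw [← MeasurableSpace.comap_sup]
  exact (condExp_indicator_snd_preimage_compProd π _ hnow (hpast _ hB)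
    (hg.measurable.mono le_sup_right le_rfl) hKg).trans
    (condExp_indicator_snd_preimage_compProd π _ hpast (hpast _ hB) hg.measurable hKg).symm

end Shadow

lemma lcost2_compProd_shadowKernel (p : ℝ) {A B : Type*} [MeasurableSpace A] [MeasurableSpace B]
    [PseudoEMetricSpace A] [OpensMeasurableSpace A] [SecondCountableTopology A]
    [PseudoEMetricSpace B] [OpensMeasurableSpace B] [SecondCountableTopology B]
    (Kμ : Kernel A A) [IsMarkovKernel Kμ] (Kν : Kernel B B) [IsMarkovKernel Kν]
    (π : Measure (A × B)) [IsFiniteMeasure π] :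
    lcost2 p (π ⊗ₘ shadowKernel Kμ Kν) =
      lcost p (π.map Prod.fst ⊗ₘ Kμ) + lcost p (π.map Prod.snd ⊗ₘ Kν) := by
  have hA : Measurable fun z : A × A => edist z.1 z.2 ^ p := measurable_edist.pow_const p
  have hB : Measurable fun z : B × B => edist z.1 z.2 ^ p := measurable_edist.pow_const p
  have hA₁ : Measurable fun z : (A × B) × (A × B) => edist z.1.1 z.2.1 ^ p :=
    hA.comp (measurable_fst.fst.prodMk measurable_snd.fst)
  rw [lcost2, lintegral_add_left hA₁, lcost, lcost,
    ← lintegral_compProd_shadowKernel_fst (Kν := Kν) hA,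
    ← lintegral_compProd_shadowKernel_snd (Kμ := Kμ) hB]

theorem stmt_4_general {N : ℕ} (X Y : Fin N → Type*)
    [∀ t, MeasurableSpace (X t)] [∀ t, MetricSpace (X t)]
    [∀ t, PolishSpace (X t)] [∀ t, BorelSpace (X t)]
    [∀ t, MeasurableSpace (Y t)] [∀ t, MetricSpace (Y t)]
    [∀ t, PolishSpace (Y t)] [∀ t, BorelSpace (Y t)]
    (p : ℝ) (hp : 1 ≤ p)
    (μ μ' : Measure (∀ t, X t)) (ν ν' : Measure (∀ t, Y t))
    [IsProbabilityMeasure μ] [IsProbabilityMeasure ν]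
    (Kμ : Kernel (∀ t, X t) (∀ t, X t)) [IsMarkovKernel Kμ]
    (Kν : Kernel (∀ t, Y t) (∀ t, Y t)) [IsMarkovKernel Kν]
    (π : Measure ((∀ t, X t) × (∀ t, Y t)))
    (hπ : π ∈ aCouplings .plain μ ν)
    (hKμc : IsCausal (μ ⊗ₘ Kμ)) (hKνc : IsCausal (ν ⊗ₘ Kν)) :
    π ⊗ₘ shadowKernel Kμ Kν ∈ aCouplings2 .causal π (shadow π Kμ Kν) ∧
      (lcost p (μ ⊗ₘ Kμ) = W p .causal μ μ' ^ p →
       lcost p (ν ⊗ₘ Kν) = W p .causal ν ν' ^ p →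
       W2 p .causal π (shadow π Kμ Kν) ^ p ≤
         W p .causal μ μ' ^ p + W p .causal ν ν' ^ p) := by
  obtain ⟨⟨hπμ, hπν⟩, -⟩ := hπ
  have : IsProbabilityMeasure (π.map Prod.fst) := hπμ ▸ inferInstance
  have : IsProbabilityMeasure π := Measure.isProbabilityMeasure_of_map Prod.fst
  have hθ : π ⊗ₘ shadowKernel Kμ Kν ∈ aCouplings2 .causal π (shadow π Kμ Kν) :=
    ⟨⟨Measure.fst_compProd π _, rfl⟩, isCausalFor_compProd_shadowKernel hKμc hKνc hπμ hπν⟩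
  refine ⟨hθ, fun hμ hν => ?_⟩
  rw [W2, ← ENNReal.rpow_mul, one_div_mul_cancel (zero_lt_one.trans_le hp).ne',
    ENNReal.rpow_one, ← hμ, ← hν, ← hπμ, ← hπν, ← lcost2_compProd_shadowKernel]
  exact iInf_le (fun θ : aCouplings2 .causal π (shadow π Kμ Kν) => lcost2 p θ.1) ⟨_, hθ⟩

/-- With `θ := π ⊗ (K^μ ⊗ K^ν) ∈ Π(π, π̃)`: if `μ ⊗ K^μ` and `ν ⊗ K^ν` are
causal, then `θ ∈ Π_c(π, π̃)`; if moreover they are `W_{p,c}`-optimal, then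
`W_{p,c}(π, π̃)^p ≤ W_{p,c}(μ, μ̃)^p + W_{p,c}(ν, ν̃)^p`. -/
theorem stmt_4 {N : ℕ} (X Y : Fin N → Type*)
    [∀ t, MeasurableSpace (X t)] [∀ t, MetricSpace (X t)]
    [∀ t, PolishSpace (X t)] [∀ t, BorelSpace (X t)]
    [∀ t, MeasurableSpace (Y t)] [∀ t, MetricSpace (Y t)]
    [∀ t, PolishSpace (Y t)] [∀ t, BorelSpace (Y t)]
    (p : ℝ) (hp : 1 ≤ p)
    (μ μ' : Measure (∀ t, X t)) (ν ν' : Measure (∀ t, Y t))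
    [IsProbabilityMeasure μ] [IsProbabilityMeasure μ']
    [IsProbabilityMeasure ν] [IsProbabilityMeasure ν']
    (hμp : MemPp p μ) (hμ'p : MemPp p μ') (hνp : MemPp p ν) (hν'p : MemPp p ν')
    (Kμ : Kernel (∀ t, X t) (∀ t, X t)) [IsMarkovKernel Kμ]
    (Kν : Kernel (∀ t, Y t) (∀ t, Y t)) [IsMarkovKernel Kν]
    (hγ : IsCoupling μ μ' (μ ⊗ₘ Kμ)) (hγ' : IsCoupling ν ν' (ν ⊗ₘ Kν))
    (π : Measure ((∀ t, X t) × (∀ t, Y t)))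
    (hπ : π ∈ aCouplings .plain μ ν)
    (hKμc : IsCausal (μ ⊗ₘ Kμ)) (hKνc : IsCausal (ν ⊗ₘ Kν)) :
    π ⊗ₘ shadowKernel Kμ Kν ∈ aCouplings2 .causal π (shadow π Kμ Kν) ∧
      (lcost p (μ ⊗ₘ Kμ) = W p .causal μ μ' ^ p →
       lcost p (ν ⊗ₘ Kν) = W p .causal ν ν' ^ p →
       W2 p .causal π (shadow π Kμ Kν) ^ p ≤
         W p .causal μ μ' ^ p + W p .causal ν ν' ^ p) :=
  stmt_4_general X Y p hp μ μ' ν ν' Kμ Kν π hπ hKμc hKνc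

end AOT
end
end
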